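/- Let p ≥ 1 and q ≥ 2 be integers and let j be an integer with 2 ≤ j ≤ p + q. Then ∑_{i=j−1}^{p+q−1} B_{p,q−1}(i) + C(2p−j, p)·C(2q−2, q−1) = B_{p,q}(j) + C(2p−j+1, p)·C(2q−3, q−1). -/

import Mathlib

/-- Binomial coefficient on integers: `C a b = 0` whenever `a < b` or `a < 0`,
    and otherwise the usual binomial coefficient. -/
def intChoose (a b : ℤ) : ℤ :=
  if a < b ∨ a < 0 then 0 else (a.toNat.choose b.toNat : ℤ)

/-- `F p s = C (2p − s − 1) (p − 1)`. -/
def F (p s : ℤ) : ℤ := intChoose (2 * p - s - 1) (p - 1)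

/-- `P s t = C (s + t − 2) (s − 1)` if `s, t ≥ 1`, and `0` otherwise. -/
def P (s t : ℤ) : ℤ :=
  if 1 ≤ s ∧ 1 ≤ t then intChoose (s + t - 2) (s - 1) else 0

/-- `A p q j = ∑_{s=1}^{p} ∑_{t=1}^{q, s+t=j} F_p(s)·F_q(t)`. -/
noncomputable def A (p q j : ℤ) : ℤ :=
  ∑ s ∈ Finset.Icc (1 : ℤ) p, ∑ t ∈ Finset.Icc (1 : ℤ) q,
    if s + t = j then F p s * F q t else 0

/-- `B p q j = ∑_{s=1}^{p} ∑_{t=1}^{q} F_p(s)·F_q(t)·P(s−j+1, t)`. -/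
noncomputable def B (p q j : ℤ) : ℤ :=
  ∑ s ∈ Finset.Icc (1 : ℤ) p, ∑ t ∈ Finset.Icc (1 : ℤ) q,
    F p s * F q t * P (s - j + 1) t

/-- `Cc p q j = ∑_{s=1}^{p} ∑_{t=j}^{q} F_p(s)·F_q(t)·P(s, t−j+1)`. -/
noncomputable def Cc (p q j : ℤ) : ℤ :=
  ∑ s ∈ Finset.Icc (1 : ℤ) p, ∑ t ∈ Finset.Icc j q,
    F p s * F q t * P s (t - j + 1)

/-!
Expanding the convolution in `t` by the upper Chu–Vandermonde identity gives
`B_{p,q}(j) = ∑_{s=j}^{p} F_p(s)·C(s−j+2q−1, q−1)`. Summing `B_{p,q−1}(i)` over `i` and exchanging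
the order of summation, the inner sum over `i` is a hockey stick, which leaves
`∑_{s=j−1}^{p} F_p(s)·(C(s−j+2q−1, q−1) − C(2q−3, q−1))`. A second hockey stick sums the `F_p(s)`
to `C(2p−j+1, p)`, and the extra term `s = j − 1` is matched with the correction terms by Pascal's
rule and `C(2q−2, q−1) = 2·C(2q−3, q−1)`.
-/

open Finset

theorem Ring.choose_neg_natCast_add_one (a n : ℕ) :
    Ring.choose (-(a + 1 : ℤ)) n = (-1) ^ n * (a + n).choose a := by
  rw [Ring.choose_neg, show ((a : ℤ) + 1 + n - 1) = ((a + n : ℕ) : ℤ) by push_cast; ring,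
    Ring.choose_natCast, Units.smul_def, Int.coe_negOnePow_natCast, smul_eq_mul,
    Nat.choose_symm_add]

/-- Upper negation turns Chu–Vandermonde for `Ring.choose` into this upper-index form. -/
theorem Nat.sum_antidiagonal_add_choose_mul (a b m : ℕ) :
    ∑ ij ∈ antidiagonal m, (a + ij.1).choose a * (b + ij.2).choose b
      = (a + b + 1 + m).choose m := by
  have h := Ring.add_choose_eq m (Commute.all (-(a + 1 : ℤ)) (-(b + 1)))
  rw [show -(a + 1 : ℤ) + -(b + 1) = -((a + b + 1 : ℕ) + 1 : ℤ) by push_cast; ring,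
    Ring.choose_neg_natCast_add_one, Nat.choose_symm_add] at h
  rw [sum_congr rfl fun ij hij => by
    rw [Ring.choose_neg_natCast_add_one, Ring.choose_neg_natCast_add_one,
      mul_mul_mul_comm, ← pow_add, mem_antidiagonal.mp hij], ← mul_sum] at h
  exact_mod_cast (mul_right_injective₀ (pow_ne_zero m (by norm_num : (-1 : ℤ) ≠ 0)) h).symm

theorem Int.sum_Icc_eq_sum_range {M : Type*} [AddCommMonoid M] (f : ℤ → M) (a b : ℤ) :
    ∑ i ∈ Icc a b, f i = ∑ k ∈ Finset.range (b + 1 - a).toNat, f (a + k) := by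
  rw [Int.Icc_eq_finset_map, sum_map]
  rfl

@[norm_cast]
lemma intChoose_natCast (m n : ℕ) : intChoose m n = m.choose n := by
  unfold intChoose
  split_ifs with h
  · rw [Nat.choose_eq_zero_of_lt (by omega), Nat.cast_zero]
  · simp

lemma intChoose_of_lt {a b : ℤ} (h : a < b) : intChoose a b = 0 := by
  simp [intChoose, h]

lemma intChoose_succ_succ (n k : ℤ) (hk : 0 ≤ k) :
    intChoose (n + 1) (k + 1) = intChoose n k + intChoose n (k + 1) := by
  rcases lt_or_ge n 0 with hn | hn
  · rw [intChoose_of_lt (by omega), intChoose_of_lt (by omega), intChoose_of_lt (by omega)]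
    simp
  · lift n to ℕ using hn
    lift k to ℕ using hk
    exact_mod_cast Nat.choose_succ_succ n k

lemma intChoose_two_mul_sub_two (q : ℤ) (hq : 2 ≤ q) :
    intChoose (2 * q - 2) (q - 1) = 2 * intChoose (2 * q - 3) (q - 1) := by
  obtain ⟨n, rfl⟩ : ∃ n : ℕ, q = n + 2 := ⟨(q - 2).toNat, by omega⟩
  rw [show 2 * (n + 2 : ℤ) - 2 = (2 * n + 1 : ℕ) + 1 by push_cast; ring,
    show 2 * (n + 2 : ℤ) - 3 = (2 * n + 1 : ℕ) by push_cast; ring,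
    show (n + 2 : ℤ) - 1 = n + 1 by ring, intChoose_succ_succ _ _ n.cast_nonneg]
  have h : (2 * n + 1).choose n + (2 * n + 1).choose (n + 1) = 2 * (2 * n + 1).choose (n + 1) := by
    rw [← Nat.choose_symm_half]; ring
  exact_mod_cast h

lemma sum_Icc_intChoose_sub (c k a b : ℤ) (hk : 0 ≤ k) (hab : a ≤ b + 1) :
    ∑ i ∈ Icc a b, intChoose (c - i) k
      = intChoose (c - a + 1) (k + 1) - intChoose (c - b) (k + 1) := by
  obtain ⟨n, rfl⟩ : ∃ n : ℕ, b = a - 1 + n := ⟨(b - a + 1).toNat, by omega⟩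
  clear hab
  induction n with
  | zero => simp [sub_add]
  | succ n ih =>
    have pascal := intChoose_succ_succ (c - (a - 1 + n + 1)) k hk
    rw [show c - (a - 1 + n + 1) + 1 = c - (a - 1 + n) by ring] at pascal
    rw [Nat.cast_succ, ← add_assoc, ← insert_Icc_right_eq_Icc_add_one (by omega),
      sum_insert (by simp), ih, pascal]
    ring

lemma sum_F_mul_P (q a : ℤ) (hq : 1 ≤ q) (ha : 1 ≤ a) :
    ∑ t ∈ Icc 1 q, F q t * P a t = intChoose (a + 2 * q - 2) (q - 1) := by
  obtain ⟨κ, rfl⟩ : ∃ κ : ℕ, q = κ + 1 := ⟨(q - 1).toNat, by omega⟩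
  obtain ⟨α, rfl⟩ : ∃ α : ℕ, a = α + 1 := ⟨(a - 1).toNat, by omega⟩
  have hrange : ((κ + 1 : ℤ) + 1 - 1).toNat = κ + 1 := by omega
  have hterm : ∀ k ∈ range (κ + 1), F (κ + 1) (1 + k) * P (α + 1) (1 + k)
      = ((α + k).choose α * (κ + (κ - k)).choose κ : ℕ) := by
    intro k hk
    have hk : k ≤ κ := Nat.lt_succ_iff.mp (mem_range.mp hk)
    rw [F, P, if_pos (by omega), Nat.cast_mul, ← intChoose_natCast, ← intChoose_natCast, mul_comm]
    congr 2 <;> push_cast [hk] <;> ring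
  rw [Int.sum_Icc_eq_sum_range, hrange, sum_congr rfl hterm, ← Nat.cast_sum,
    ← Nat.sum_antidiagonal_eq_sum_range_succ (fun x y => (α + x).choose α * (κ + y).choose κ),
    Nat.sum_antidiagonal_add_choose_mul, ← intChoose_natCast]
  congr 1 <;> push_cast <;> ring

lemma B_eq_sum (p q j : ℤ) (hq : 1 ≤ q) (hj : 1 ≤ j) :
    B p q j = ∑ s ∈ Icc j p, F p s * intChoose (s - j + 2 * q - 1) (q - 1) := by
  calc B p q j = ∑ s ∈ Icc 1 p, F p s * ∑ t ∈ Icc 1 q, F q t * P (s - j + 1) t := by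
        simp only [B, mul_sum, mul_assoc]
    _ = ∑ s ∈ Icc j p, F p s * ∑ t ∈ Icc 1 q, F q t * P (s - j + 1) t := by
        refine (sum_subset (Icc_subset_Icc_left hj) fun s hs hsj => ?_).symm
        simp only [mem_Icc] at hs hsj
        have hP : ∀ t, P (s - j + 1) t = 0 := fun t => if_neg (by omega)
        simp [hP]
    _ = _ := sum_congr rfl fun s hs => by
        rw [sum_F_mul_P q _ hq (by linarith [(mem_Icc.mp hs).1])]
        ring_nf

lemma sum_Icc_F (p a : ℤ) (hp : 1 ≤ p) (ha : a ≤ p + 1) :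
    ∑ s ∈ Icc a p, F p s = intChoose (2 * p - a) p := by
  have h := sum_Icc_intChoose_sub (2 * p - 1) (p - 1) a p (by omega) ha
  rw [intChoose_of_lt (show 2 * p - 1 - p < p - 1 + 1 by omega), sub_zero] at h
  convert h using 2 with s
  · rw [F, sub_right_comm]
  · ring
  · ring

lemma sum_Icc_B (p q j : ℤ) (hq : 2 ≤ q) (hj : 2 ≤ j) :
    ∑ i ∈ Icc (j - 1) (p + q - 1), B p (q - 1) i
      = ∑ s ∈ Icc (j - 1) p,
          F p s * (intChoose (s - j + 2 * q - 1) (q - 1) - intChoose (2 * q - 3) (q - 1)) := by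
  calc _ = ∑ i ∈ Icc (j - 1) (p + q - 1), ∑ s ∈ Icc i p,
          F p s * intChoose (s + 2 * q - 3 - i) (q - 2) :=
        sum_congr rfl fun i hi => by
          rw [B_eq_sum p (q - 1) i (by omega) (by linarith [(mem_Icc.mp hi).1])]
          exact sum_congr rfl fun s _ => by congr 2 <;> ring
    _ = ∑ s ∈ Icc (j - 1) p, ∑ i ∈ Icc (j - 1) s,
          F p s * intChoose (s + 2 * q - 3 - i) (q - 2) :=
        sum_comm' fun i s => by simp only [mem_Icc]; omega
    _ = _ := sum_congr rfl fun s hs => by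
        rw [← mul_sum, sum_Icc_intChoose_sub _ _ _ _ (by omega) (by linarith [(mem_Icc.mp hs).1])]
        ring_nf

theorem sum_B_step_general (p q : ℤ) (hp : 1 ≤ p) (hq : 2 ≤ q)
    (j : ℤ) (hj2 : 2 ≤ j) :
    (∑ i ∈ Finset.Icc (j - 1) (p + q - 1), B p (q - 1) i)
        + intChoose (2 * p - j) p * intChoose (2 * q - 2) (q - 1)
      = B p q j + intChoose (2 * p - j + 1) p * intChoose (2 * q - 3) (q - 1) := by
  rw [sum_Icc_B p q j hq hj2, B_eq_sum p q j (by omega) (by omega)]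
  rcases lt_or_ge p (j - 1) with hpj | hjp
  · rw [Icc_eq_empty (by omega), Icc_eq_empty (by omega),
      intChoose_of_lt (show 2 * p - j < p by omega),
      intChoose_of_lt (show 2 * p - j + 1 < p by omega)]
    simp
  have hF : F p (j - 1) = intChoose (2 * p - j) (p - 1) := by rw [F]; ring_nf
  have hpascal := intChoose_succ_succ (2 * p - j) (p - 1) (by omega)
  rw [sub_add_cancel] at hpascal
  simp only [mul_sub, sum_sub_distrib, ← sum_mul]
  rw [sum_Icc_F p (j - 1) hp (by omega), ← insert_Icc_add_one_left_eq_Icc hjp,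
    sum_insert (by simp), sub_add_cancel, hF, show j - 1 - j + 2 * q - 1 = 2 * q - 2 by ring,
    intChoose_two_mul_sub_two q hq, show 2 * p - (j - 1) = 2 * p - j + 1 by ring, hpascal]
  ring

/-- for `p ≥ 1`, `q ≥ 2`, `2 ≤ j ≤ p + q`,
  `∑_{i=j−1}^{p+q−1} B_{p,q−1}(i) + C(2p−j, p)·C(2q−2, q−1)
     = B_{p,q}(j) + C(2p−j+1, p)·C(2q−3, q−1)`. -/
theorem sum_B_step (p q : ℤ) (hp : 1 ≤ p) (hq : 2 ≤ q)
    (j : ℤ) (hj2 : 2 ≤ j) (hjpq : j ≤ p + q) :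
    (∑ i ∈ Finset.Icc (j - 1) (p + q - 1), B p (q - 1) i)
        + intChoose (2 * p - j) p * intChoose (2 * q - 2) (q - 1)
      = B p q j + intChoose (2 * p - j + 1) p * intChoose (2 * q - 3) (q - 1) :=
  sum_B_step_general p q hp hq j hj2
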